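/- arXiv:1806.06340 — 5 statements merged into one kernel-verified Lean document; each statement's English description precedes it below -/
import Mathlib

section
/- For a vertex algebra V, the quotient V/C₂(V) with product induced by the (-1)-th product and bracket induced by the 0-th product is a commutative Poisson algebra. In particular, modulo C₂(V): a_0 b ≡ -b_0 a, (a_{-1}b)_{-1}v ≡ a_{-1}(b_{-1}v), and (a_{-1}b)_0 v ≡ a_{-1}(b_0 v) + b_{-1}(a_0 v) for all a,b,v ∈ V. -/
open scoped BigOperators

noncomputable section

/-- The generalized binomial coefficient `p choose i` for `p : ℤ`, as a complex number. -/
def zchoose (p : ℤ) (i : ℕ) : ℂ :=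
  (∏ j ∈ Finset.range i, ((p : ℂ) - (j : ℂ))) / (i.factorial : ℂ)

/-- A vertex algebra over `ℂ`: a bilinear system of modes `u ↦ u_n`, a vacuum vector `𝟙`,
truncation, vacuum/creation axioms and the Borcherds (Jacobi) identity. -/
structure VertexAlgebra (V : Type) [AddCommGroup V] [Module ℂ V] where
  mode : V → ℤ → V → V
  one : V
  mode_add_left : ∀ (u v : V) (n : ℤ) (w : V), mode (u + v) n w = mode u n w + mode v n w
  mode_smul_left : ∀ (c : ℂ) (u : V) (n : ℤ) (w : V), mode (c • u) n w = c • mode u n w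
  mode_add_right : ∀ (u : V) (n : ℤ) (v w : V), mode u n (v + w) = mode u n v + mode u n w
  mode_smul_right : ∀ (u : V) (n : ℤ) (c : ℂ) (v : V), mode u n (c • v) = c • mode u n v
  trunc : ∀ u v : V, ∃ N : ℤ, ∀ n ≥ N, mode u n v = 0
  vacuum_left : ∀ (n : ℤ) (v : V), mode one n v = if n = -1 then v else 0
  creation_nonneg : ∀ (u : V) (n : ℤ), 0 ≤ n → mode u n one = 0
  creation : ∀ u : V, mode u (-1) one = u
  borcherds : ∀ (u v w : V) (p q r : ℤ),
    ∑ᶠ i : ℕ, zchoose p i • mode (mode u (r + i) v) (p + q - i) w =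
      ∑ᶠ i : ℕ, ((-1 : ℂ) ^ i * zchoose r i) •
        (mode u (p + r - i) (mode v (q + i) w) -
          ((-1 : ℂ) ^ r) • mode v (q + r - i) (mode u (p + i) w))

/-- A list of mode indices all equal to `0` or `-1`. -/
def GoodIdx (ns : List ℤ) : Prop := ∀ n ∈ ns, n = 0 ∨ n = -1

namespace VertexAlgebra

variable {V : Type} [AddCommGroup V] [Module ℂ V] (VA : VertexAlgebra V)

/-- The translation operator `𝒟 v = v_{-2} 𝟙`. -/
def D (v : V) : V := VA.mode v (-2) VA.one

/-- `C₂(V) = span_ℂ { u_{-2} v }`. -/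
def C2 : Submodule ℂ V := Submodule.span ℂ {w : V | ∃ u v : V, w = VA.mode u (-2) v}

/-- `Cₙ(V) = span_ℂ { u_{-n} v }`. -/
def Cn (n : ℕ) : Submodule ℂ V :=
  Submodule.span ℂ {w : V | ∃ u v : V, w = VA.mode u (-(n : ℤ)) v}


/-- The iterated word `a_{n₁} a_{n₂} ⋯ a_{n_t} a`. -/
def word (a : V) (ns : List ℤ) : V := ns.foldr (fun n acc => VA.mode a n acc) a

/-- The radical `r_{0,-1}(M)` of a subspace `M` with respect to the 0-th and (-1)-th products. -/
def rad (M : Set V) : Set V :=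
  {v : V | ∃ m : ℕ, ∀ ns : List ℤ, GoodIdx ns → m ≤ ns.length → VA.word v ns ∈ M}

/-- The left-strong radical `lsr_{0,-1}(M)`. -/
def lsrad (M : Set V) : Set V :=
  {v : V | ∀ b : V, ∃ m : ℕ, ∀ (ns : List ℤ) (s : ℤ), GoodIdx ns → m ≤ ns.length →
    (s = 0 ∨ s = -1) → VA.mode b s (VA.word v ns) ∈ M}

/-- The right-strong radical `rsr_{0,-1}(M)`. -/
def rsrad (M : Set V) : Set V :=
  {v : V | ∀ w : V, ∃ m : ℕ, ∀ (ns : List ℤ) (s : ℤ), GoodIdx ns → m ≤ ns.length →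
    (s = 0 ∨ s = -1) → VA.mode (VA.word v ns) s w ∈ M}

/-- The strong radical `sr_{0,-1}(M) = lsr_{0,-1}(M) ∩ rsr_{0,-1}(M)`. -/
def srad (M : Set V) : Set V := VA.lsrad M ∩ VA.rsrad M

/-- `M` is a Mathieu-Zhao subspace of `V` with respect to the 0-th and (-1)-th products. -/
def IsMZ (M : Set V) : Prop := VA.rad M = VA.srad M

/-- A (two-sided) ideal of a vertex algebra. -/
def IsIdeal (I : Submodule ℂ V) : Prop :=
  ∀ (v w : V) (n : ℤ), w ∈ I → VA.mode v n w ∈ I ∧ VA.mode w n v ∈ I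

/-- `t`-th power of `a` under the (-1)-th product: `a_{-1}(a_{-1}(⋯ a))`, with `pow a 0 = 𝟙`. -/
def pow (a : V) (t : ℕ) : V :=
  Nat.rec VA.one (fun _ acc => VA.mode a (-1) acc) t

end VertexAlgebra

/-- A homomorphism of vertex algebras: a linear map preserving all modes and the vacuum. -/
def VertexAlgebra.IsHom {V W : Type} [AddCommGroup V] [Module ℂ V] [AddCommGroup W]
    [Module ℂ W] (VA : VertexAlgebra V) (WA : VertexAlgebra W) (f : V →ₗ[ℂ] W) : Prop :=
  f VA.one = WA.one ∧ ∀ (u v : V) (n : ℤ), f (VA.mode u n v) = WA.mode (f u) n (f v)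

/-- A vertex operator algebra: a `ℤ`-graded vertex algebra with finite-dimensional
pieces, grading bounded below, and a conformal vector `ω` whose modes `L(n) = ω_{n+1}`
satisfy the Virasoro relations, give the grading by `L(0)`, and realize `L(-1) = 𝒟`. -/
structure VertexOperatorAlgebra (V : Type) [AddCommGroup V] [Module ℂ V]
    extends VertexAlgebra V where
  grade : ℤ → Submodule ℂ V
  internal : DirectSum.IsInternal grade
  one_mem : one ∈ grade 0
  mode_grade : ∀ {k m n : ℤ} {u w : V}, u ∈ grade k → w ∈ grade n →
    mode u m w ∈ grade (k + n - m - 1)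
  fin_dim : ∀ n : ℤ, FiniteDimensional ℂ (grade n)
  bounded_below : ∃ n₀ : ℤ, ∀ n < n₀, grade n = ⊥
  omega : V
  omega_mem : omega ∈ grade 2
  central_charge : ℂ
  virasoro : ∀ (m n : ℤ) (v : V),
    mode omega (m + 1) (mode omega (n + 1) v) - mode omega (n + 1) (mode omega (m + 1) v) =
      ((m : ℂ) - (n : ℂ)) • mode omega (m + n + 1) v +
        (if m + n = 0 then (((m : ℂ) ^ 3 - (m : ℂ)) / 12) * central_charge else 0) • v
  L0_grading : ∀ (n : ℤ) (v : V), v ∈ grade n → mode omega 1 v = (n : ℂ) • v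
  L_neg1 : ∀ v : V, mode omega 0 v = mode v (-2) one

section Aux
namespace VertexAlgebra

variable {V : Type} [AddCommGroup V] [Module ℂ V] (VA : VertexAlgebra V)

lemma finsum_range {M : Type*} [AddCommMonoid M] {f : ℕ → M} {N : ℕ}
    (h : ∀ i, N ≤ i → f i = 0) : ∑ᶠ i, f i = ∑ i ∈ Finset.range N, f i := by
  apply finsum_eq_finset_sum_of_support_subset
  intro i hi
  simp only [Function.mem_support] at hi
  simp only [Finset.coe_range, Set.mem_Iio]
  by_contra hc
  exact hi (h i (le_of_not_gt hc))

lemma mode_zero_left' (n : ℤ) (w : V) : VA.mode 0 n w = 0 := by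
  have h := VA.mode_add_left 0 0 n w
  rw [zero_add] at h
  exact (left_eq_add.mp h)

lemma mode_zero_right' (u : V) (n : ℤ) : VA.mode u n 0 = 0 := by
  have h := VA.mode_add_right u n 0 0
  rw [zero_add] at h
  exact (left_eq_add.mp h)

lemma zchoose_zero' (p : ℤ) : zchoose p 0 = 1 := by simp [zchoose]

lemma zchoose_zero_left {i : ℕ} (h : 1 ≤ i) : zchoose 0 i = 0 := by
  unfold zchoose
  rw [Finset.prod_eq_zero (Finset.mem_range.mpr h) (by simp)]
  simp

lemma zchoose_one_one : zchoose 1 1 = 1 := by simp [zchoose]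

lemma zchoose_one_ge {i : ℕ} (h : 2 ≤ i) : zchoose 1 i = 0 := by
  unfold zchoose
  rw [Finset.prod_eq_zero (i := 1) (Finset.mem_range.mpr h) (by norm_num)]
  simp

lemma zchoose_neg_one (i : ℕ) : zchoose (-1) i = (-1) ^ i := by
  unfold zchoose
  rw [div_eq_iff (by exact_mod_cast i.factorial_ne_zero)]
  induction i with
  | zero => simp
  | succ n ih =>
      rw [Finset.prod_range_succ, ih, Nat.factorial_succ]
      push_cast
      ring

lemma zchoose_neg_two (i : ℕ) : zchoose (-2) i = (-1) ^ i * (i + 1) := by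
  unfold zchoose
  rw [div_eq_iff (by exact_mod_cast i.factorial_ne_zero)]
  induction i with
  | zero => simp
  | succ n ih =>
      rw [Finset.prod_range_succ, ih, Nat.factorial_succ]
      push_cast
      ring

/-- Borcherds identity with both sides truncated to finite sums. -/
lemma borcherds_eval (u v w : V) (p q r : ℤ) (NL NR : ℕ)
    (hL : ∀ i : ℕ, NL ≤ i →
      zchoose p i • VA.mode (VA.mode u (r + i) v) (p + q - i) w = 0)
    (hR : ∀ i : ℕ, NR ≤ i →
      ((-1 : ℂ) ^ i * zchoose r i) •
        (VA.mode u (p + r - i) (VA.mode v (q + i) w) -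
          ((-1 : ℂ) ^ r) • VA.mode v (q + r - i) (VA.mode u (p + i) w)) = 0) :
    ∑ i ∈ Finset.range NL, zchoose p i • VA.mode (VA.mode u (r + i) v) (p + q - i) w =
      ∑ i ∈ Finset.range NR, ((-1 : ℂ) ^ i * zchoose r i) •
        (VA.mode u (p + r - i) (VA.mode v (q + i) w) -
          ((-1 : ℂ) ^ r) • VA.mode v (q + r - i) (VA.mode u (p + i) w)) := by
  rw [← finsum_range hL, ← finsum_range hR]
  exact VA.borcherds u v w p q r

lemma mode_neg_two_mem (u w : V) : VA.mode u (-2) w ∈ VA.C2 :=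
  Submodule.subset_span ⟨u, w, rfl⟩

lemma sum_single {M : Type*} [AddCommMonoid M] (f : ℕ → M) (i₀ : ℕ)
    (h : ∀ j, j ≠ i₀ → f j = 0) : ∑ i ∈ Finset.range (i₀ + 1), f i = f i₀ := by
  rw [Finset.sum_range_succ, Finset.sum_eq_zero, zero_add]
  intro j hj
  exact h j (by have := Finset.mem_range.mp hj; omega)

/-- `(𝒟u)_q w = (-q) u_{q-1} w` for `q ≤ -1`. -/
lemma D_mode_neg (u w : V) (q : ℤ) (hq : q ≤ -1) :
    VA.mode (VA.mode u (-2) VA.one) q w = ((-q : ℤ) : ℂ) • VA.mode u (q - 1) w := by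
  set i₀ : ℕ := (-1 - q).toNat with hi₀def
  have hi₀ : (i₀ : ℤ) = -1 - q := Int.toNat_of_nonneg (by omega)
  have key := VA.borcherds_eval u VA.one w 0 q (-2) 1 (i₀ + 1) ?hL ?hR
  case hL =>
    intro i hi
    rw [zchoose_zero_left hi, zero_smul]
  case hR =>
    intro i hi
    rw [VA.vacuum_left, VA.vacuum_left, if_neg (by omega : ¬(q + (i : ℤ) = -1)),
      if_neg (by omega : ¬(q + -2 - (i : ℤ) = -1)), VA.mode_zero_right', smul_zero,
      sub_zero, smul_zero]
  have e1 : ∑ i ∈ Finset.range 1,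
      zchoose 0 i • VA.mode (VA.mode u (-2 + i) VA.one) (0 + q - i) w =
      VA.mode (VA.mode u (-2) VA.one) q w := by
    rw [Finset.sum_range_one]
    norm_num [zchoose_zero']
  have e2 : ∑ i ∈ Finset.range (i₀ + 1), ((-1 : ℂ) ^ i * zchoose (-2) i) •
      (VA.mode u (0 + -2 - i) (VA.mode VA.one (q + i) w) -
        ((-1 : ℂ) ^ (-2 : ℤ)) • VA.mode VA.one (q + -2 - i) (VA.mode u (0 + i) w)) =
      ((-q : ℤ) : ℂ) • VA.mode u (q - 1) w := by
    rw [sum_single]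
    · rw [VA.vacuum_left, VA.vacuum_left, if_pos (by omega : q + (i₀ : ℤ) = -1),
        if_neg (by omega : ¬(q + -2 - (i₀ : ℤ) = -1)), smul_zero, sub_zero,
        zchoose_neg_two, show (0 + -2 - (i₀ : ℤ)) = q - 1 by omega]
      congr 1
      have hc : ((i₀ : ℂ)) = -1 - (q : ℂ) := by exact_mod_cast hi₀
      rw [← mul_assoc, ← mul_pow]
      push_cast [hc]
      ring
    · intro j hj
      have hj' : (j : ℤ) ≠ -1 - q := by
        intro h; exact hj (by omega)
      rw [VA.vacuum_left, VA.vacuum_left, if_neg (by omega : ¬(q + (j : ℤ) = -1)),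
        if_neg (by omega : ¬(q + -2 - (j : ℤ) = -1)), VA.mode_zero_right', smul_zero,
        sub_zero, smul_zero]
  rw [e1, e2] at key
  exact key

lemma mode_mem_C2_aux : ∀ (k : ℕ) (u w : V), VA.mode u (-2 - (k : ℤ)) w ∈ VA.C2 := by
  intro k
  induction k with
  | zero => intro u w; simpa using VA.mode_neg_two_mem u w
  | succ k ih =>
      intro u w
      have hne : (((-(-2 - (k : ℤ)) : ℤ)) : ℂ) ≠ 0 := Int.cast_ne_zero.mpr (by omega)
      have hD := VA.D_mode_neg u w (-2 - (k : ℤ)) (by omega)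
      rw [show (-2 - ((k + 1 : ℕ) : ℤ)) = (-2 - (k : ℤ)) - 1 by push_cast; ring]
      have h2 : VA.mode u ((-2 - (k : ℤ)) - 1) w =
          ((((-(-2 - (k : ℤ)) : ℤ)) : ℂ))⁻¹ •
            VA.mode (VA.mode u (-2) VA.one) (-2 - (k : ℤ)) w := by
        rw [hD, smul_smul, inv_mul_cancel₀ hne, one_smul]
      rw [h2]
      exact Submodule.smul_mem _ _ (ih (VA.mode u (-2) VA.one) w)

lemma mode_mem_C2 (u w : V) (n : ℤ) (hn : n ≤ -2) : VA.mode u n w ∈ VA.C2 := by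
  obtain ⟨k, rfl⟩ : ∃ k : ℕ, n = -2 - (k : ℤ) := ⟨(-2 - n).toNat, by omega⟩
  exact VA.mode_mem_C2_aux k u w

lemma sum_sub_mem {M : Submodule ℂ V} {f : ℕ → V} {K : ℕ} {Y : V}
    (h0 : f 0 - Y ∈ M) (h : ∀ i, 1 ≤ i → f i ∈ M) :
    (∑ i ∈ Finset.range (K + 1), f i) - Y ∈ M := by
  rw [Finset.sum_range_succ']
  have e : (∑ i ∈ Finset.range K, f (i + 1)) + f 0 - Y =
      (∑ i ∈ Finset.range K, f (i + 1)) + (f 0 - Y) := by abel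
  rw [e]
  exact Submodule.add_mem _ (Submodule.sum_mem _ fun i _ => h (i + 1) (by omega)) h0

lemma claim1 (a b : V) : VA.mode a (-1) b - VA.mode b (-1) a ∈ VA.C2 := by
  obtain ⟨N₀, hN₀⟩ := VA.trunc a b
  have key := VA.borcherds_eval a b VA.one (-1) (-1) 0 (N₀.toNat + 1) 1 ?hL ?hR
  case hL => intro i hi; rw [hN₀ (0 + (i:ℤ)) (by omega), VA.mode_zero_left', smul_zero]
  case hR => intro i hi; rw [zchoose_zero_left hi, mul_zero, zero_smul]
  rw [Finset.sum_range_one] at key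
  norm_num [zchoose_zero', VA.creation] at key
  rw [← key]
  exact Submodule.sum_mem _ fun i _ => Submodule.smul_mem _ _ (VA.mode_mem_C2 _ _ _ (by omega))

lemma claim3 (a b : V) : VA.mode a 0 b + VA.mode b 0 a ∈ VA.C2 := by
  obtain ⟨N₀, hN₀⟩ := VA.trunc a b
  have key := VA.borcherds_eval a b VA.one (-1) (-1) 1 (N₀.toNat + 1) (1 + 1) ?hL ?hR
  case hL => intro i hi; rw [hN₀ (1 + (i:ℤ)) (by omega), VA.mode_zero_left', smul_zero]
  case hR => intro i hi; rw [zchoose_one_ge hi, mul_zero, zero_smul]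
  have e2 : ∑ i ∈ Finset.range (1 + 1), ((-1:ℂ)^i * zchoose 1 i) •
      (VA.mode a (-1 + 1 - (i:ℤ)) (VA.mode b (-1 + (i:ℤ)) VA.one) -
        ((-1:ℂ)^(1:ℤ)) • VA.mode b (-1 + 1 - (i:ℤ)) (VA.mode a (-1 + (i:ℤ)) VA.one)) =
      VA.mode a 0 b + VA.mode b 0 a := by
    rw [Finset.sum_range_succ, Finset.sum_range_one]
    norm_num [zchoose_zero', zchoose_one_one, VA.creation, VA.creation_nonneg,
      VA.mode_zero_right']
  rw [e2] at key
  rw [← key]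
  exact Submodule.sum_mem _ fun i _ => Submodule.smul_mem _ _ (VA.mode_mem_C2 _ _ _ (by omega))

lemma claim4 (a b v : V) :
    VA.mode (VA.mode a 0 b) 0 v =
      VA.mode a 0 (VA.mode b 0 v) - VA.mode b 0 (VA.mode a 0 v) := by
  have key := VA.borcherds_eval a b v 0 0 0 1 1 ?hL ?hR
  case hL => intro i hi; rw [zchoose_zero_left hi, zero_smul]
  case hR => intro i hi; rw [zchoose_zero_left hi, mul_zero, zero_smul]
  rw [Finset.sum_range_one, Finset.sum_range_one] at key
  norm_num [zchoose_zero'] at key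
  exact key

lemma claim2 (a b v : V) :
    VA.mode (VA.mode a (-1) b) (-1) v - VA.mode a (-1) (VA.mode b (-1) v) ∈ VA.C2 := by
  obtain ⟨Na, hNa⟩ := VA.trunc a v
  obtain ⟨Nb, hNb⟩ := VA.trunc b v
  have key := VA.borcherds_eval a b v 0 (-1) (-1) 1 ((max Na (Nb + 1)).toNat + 1) ?hL ?hR
  case hL => intro i hi; rw [zchoose_zero_left hi, zero_smul]
  case hR =>
    intro i hi
    rw [hNb (-1 + (i:ℤ)) (by omega), hNa (0 + (i:ℤ)) (by omega),
      VA.mode_zero_right', VA.mode_zero_right', smul_zero, sub_zero, smul_zero]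
  rw [Finset.sum_range_one] at key
  norm_num [zchoose_zero'] at key
  rw [key]
  refine sum_sub_mem ?_ ?_
  · norm_num [zchoose_zero']
    exact VA.mode_neg_two_mem _ _
  · intro i hi
    exact Submodule.add_mem _
      (Submodule.smul_mem _ _ (VA.mode_mem_C2 _ _ _ (by omega)))
      (Submodule.smul_mem _ _ (VA.mode_mem_C2 _ _ _ (by omega)))

lemma claim5 (a b v : V) :
    VA.mode (VA.mode a (-1) b) 0 v -
      (VA.mode a (-1) (VA.mode b 0 v) + VA.mode b (-1) (VA.mode a 0 v)) ∈ VA.C2 := by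
  obtain ⟨Na, hNa⟩ := VA.trunc a v
  obtain ⟨Nb, hNb⟩ := VA.trunc b v
  have key := VA.borcherds_eval a b v 0 0 (-1) 1 ((max Na (Nb + 1)).toNat + 1) ?hL ?hR
  case hL => intro i hi; rw [zchoose_zero_left hi, zero_smul]
  case hR =>
    intro i hi
    rw [hNb (0 + (i:ℤ)) (by omega), hNa (0 + (i:ℤ)) (by omega),
      VA.mode_zero_right', VA.mode_zero_right', smul_zero, sub_zero, smul_zero]
  rw [Finset.sum_range_one] at key
  norm_num [zchoose_zero'] at key
  rw [key]
  refine sum_sub_mem ?_ ?_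
  · norm_num [zchoose_zero']
  · intro i hi
    exact Submodule.add_mem _
      (Submodule.smul_mem _ _ (VA.mode_mem_C2 _ _ _ (by omega)))
      (Submodule.smul_mem _ _ (VA.mode_mem_C2 _ _ _ (by omega)))

end VertexAlgebra
end Aux

/-- The quotient `V/C₂(V)`, with product induced by the (-1)-th product and
bracket induced by the 0-th product, is a commutative Poisson algebra. In particular,
modulo `C₂(V)`: the (-1)-product is commutative and associative, `a_0 b ≡ -b_0 a`,
`(a_0 b)_0 v = a_0(b_0 v) - b_0(a_0 v)` (exactly), and
`(a_{-1}b)_0 v ≡ a_{-1}(b_0 v) + b_{-1}(a_0 v)`. -/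
theorem stmt3 {V : Type} [AddCommGroup V] [Module ℂ V] (VA : VertexAlgebra V) :
    (∀ a b : V, VA.mode a (-1) b - VA.mode b (-1) a ∈ VA.C2) ∧
    (∀ a b v : V,
      VA.mode (VA.mode a (-1) b) (-1) v - VA.mode a (-1) (VA.mode b (-1) v) ∈ VA.C2) ∧
    (∀ a b : V, VA.mode a 0 b + VA.mode b 0 a ∈ VA.C2) ∧
    (∀ a b v : V,
      VA.mode (VA.mode a 0 b) 0 v =
        VA.mode a 0 (VA.mode b 0 v) - VA.mode b 0 (VA.mode a 0 v)) ∧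
    (∀ a b v : V,
      VA.mode (VA.mode a (-1) b) 0 v -
        (VA.mode a (-1) (VA.mode b 0 v) + VA.mode b (-1) (VA.mode a 0 v)) ∈ VA.C2) :=
  ⟨VA.claim1, VA.claim2, VA.claim3, VA.claim4, VA.claim5⟩
end
end

section
/- Let V be a vertex algebra and M a subspace of V containing the vacuum vector 𝟙. Then M is a Mathieu-Zhao subspace of V with respect to the 0-th and (-1)-th products if and only if M = V. -/
open scoped BigOperators

noncomputable section

namespace VertexAlgebra

variable {V : Type} [AddCommGroup V] [Module ℂ V] (VA : VertexAlgebra V)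

theorem word_one_mem {M : Submodule ℂ V} (hone : VA.one ∈ M) (ns : List ℤ) :
    VA.word VA.one ns ∈ M := by
  induction ns with
  | nil => exact hone
  | cons n ns ih =>
    change VA.mode VA.one n (VA.word VA.one ns) ∈ M
    rw [VA.vacuum_left]
    split_ifs
    · exact ih
    · exact M.zero_mem

theorem one_mem_rad {M : Submodule ℂ V} (hone : VA.one ∈ M) : VA.one ∈ VA.rad (M : Set V) :=
  ⟨0, fun ns _ _ => VA.word_one_mem hone ns⟩

theorem word_one_replicate_neg_one (m : ℕ) :
    VA.word VA.one (List.replicate m (-1)) = VA.one := by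
  induction m with
  | zero => rfl
  | succ k ih =>
    change VA.mode VA.one (-1) (VA.word VA.one (List.replicate k (-1))) = VA.one
    rw [ih, VA.vacuum_left, if_pos rfl]

/-- Taking `ns = [-1, …, -1]` and `s = -1` in the definition of `lsr` gives `b_{-1} 𝟙 = b`. -/
theorem eq_univ_of_one_mem_lsrad {M : Set V} (h : VA.one ∈ VA.lsrad M) : M = Set.univ := by
  refine Set.eq_univ_of_forall fun b => ?_
  obtain ⟨m, hm⟩ := h b
  have hgood : GoodIdx (List.replicate m (-1 : ℤ)) :=
    fun _ hx => Or.inr (List.eq_of_mem_replicate hx)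
  simpa only [word_one_replicate_neg_one, creation] using
    hm (List.replicate m (-1)) (-1) hgood (List.length_replicate ▸ le_rfl) (Or.inr rfl)

theorem isMZ_univ : VA.IsMZ (Set.univ : Set V) := by
  ext v
  simp only [rad, srad, lsrad, rsrad, Set.mem_univ, implies_true, exists_const,
    Set.mem_ofPred_eq, Set.mem_inter_iff, and_self]

end VertexAlgebra

/-- If `𝟙 ∈ M`, then `M` is a MZ_{0,-1}-subspace of `V` iff `M = V`. -/
theorem stmt9 {V : Type} [AddCommGroup V] [Module ℂ V] (VA : VertexAlgebra V)
    (M : Submodule ℂ V) (hone : VA.one ∈ M) :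
    VA.IsMZ (M : Set V) ↔ M = ⊤ := by
  constructor
  · intro hMZ
    have hsrad : VA.one ∈ VA.srad (M : Set V) := hMZ ▸ VA.one_mem_rad hone
    exact SetLike.coe_injective (VA.eq_univ_of_one_mem_lsrad hsrad.1)
  · rintro rfl
    simpa only [Submodule.top_coe] using VA.isMZ_univ
end
end

section
/- Let f : V¹ → V² be a homomorphism of vertex algebras. If M is a Mathieu-Zhao subspace of V² with respect to the 0-th and (-1)-th products, then f⁻¹(M) is a Mathieu-Zhao subspace of V¹. -/
open scoped BigOperators

noncomputable section

theorem GoodIdx.of_cons {n : ℤ} {ns : List ℤ} (h : GoodIdx (n :: ns)) : GoodIdx ns :=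
  fun k hk => h k (List.mem_cons_of_mem n hk)

theorem GoodIdx.head {n : ℤ} {ns : List ℤ} (h : GoodIdx (n :: ns)) : n = 0 ∨ n = -1 :=
  h n List.mem_cons_self

namespace VertexAlgebra

variable {V W : Type} [AddCommGroup V] [Module ℂ V] [AddCommGroup W] [Module ℂ W]
  (VA : VertexAlgebra V) (WA : VertexAlgebra W)

theorem word_cons (a : V) (n : ℤ) (ns : List ℤ) :
    VA.word a (n :: ns) = VA.mode a n (VA.word a ns) := rfl

-- Take `b = v`: then `v_s (v_{n₁} ⋯ v_{n_t} v)` is itself a word in `v` of length `t + 1`.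
theorem lsrad_subset_rad (M : Set V) : VA.lsrad M ⊆ VA.rad M := by
  intro v hv
  obtain ⟨m, hm⟩ := hv v
  refine ⟨m + 1, fun ns hns hlen => ?_⟩
  match ns, hns, hlen with
  | n :: rest, hns, hlen =>
    rw [word_cons]
    exact hm rest n (GoodIdx.of_cons hns) (by simpa using hlen) (GoodIdx.head hns)

theorem srad_subset_rad (M : Set V) : VA.srad M ⊆ VA.rad M :=
  Set.inter_subset_left.trans (VA.lsrad_subset_rad M)

variable {VA WA} {f : V → W}
  (hf : ∀ (u v : V) (n : ℤ), f (VA.mode u n v) = WA.mode (f u) n (f v))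
include hf

theorem map_word (v : V) (ns : List ℤ) : f (VA.word v ns) = WA.word (f v) ns := by
  induction ns with
  | nil => rfl
  | cons n rest ih => rw [word_cons, word_cons, hf, ih]

theorem rad_preimage (M : Set W) : VA.rad (f ⁻¹' M) = f ⁻¹' WA.rad M := by
  ext v
  simp only [rad, Set.mem_preimage, Set.mem_ofPred_eq, map_word hf]

theorem preimage_lsrad_subset (M : Set W) : f ⁻¹' WA.lsrad M ⊆ VA.lsrad (f ⁻¹' M) := by
  intro v hv b
  obtain ⟨m, hm⟩ := hv (f b)
  refine ⟨m, fun ns s hns hlen hs => ?_⟩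
  rw [Set.mem_preimage, hf, map_word hf]
  exact hm ns s hns hlen hs

theorem preimage_rsrad_subset (M : Set W) : f ⁻¹' WA.rsrad M ⊆ VA.rsrad (f ⁻¹' M) := by
  intro v hv w
  obtain ⟨m, hm⟩ := hv (f w)
  refine ⟨m, fun ns s hns hlen hs => ?_⟩
  rw [Set.mem_preimage, hf, map_word hf]
  exact hm ns s hns hlen hs

theorem preimage_srad_subset (M : Set W) : f ⁻¹' WA.srad M ⊆ VA.srad (f ⁻¹' M) :=
  fun _ ⟨hl, hr⟩ => ⟨preimage_lsrad_subset hf M hl, preimage_rsrad_subset hf M hr⟩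

theorem isMZ_preimage {M : Set W} (hM : WA.IsMZ M) : VA.IsMZ (f ⁻¹' M) := by
  refine (VA.srad_subset_rad _).antisymm' ?_
  rw [rad_preimage hf, hM]
  exact preimage_srad_subset hf M

end VertexAlgebra

/-- If `f : V¹ → V²` is a homomorphism of vertex algebras and `M` is a
MZ_{0,-1}-subspace of `V²`, then `f⁻¹(M)` is a MZ_{0,-1}-subspace of `V¹`. -/
theorem stmt10 {V W : Type} [AddCommGroup V] [Module ℂ V] [AddCommGroup W] [Module ℂ W]
    (VA : VertexAlgebra V) (WA : VertexAlgebra W) (f : V →ₗ[ℂ] W)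
    (hf : VertexAlgebra.IsHom VA WA f) (M : Submodule ℂ W) (hM : WA.IsMZ (M : Set W)) :
    VA.IsMZ ((M.comap f : Submodule ℂ V) : Set V) :=
  VertexAlgebra.isMZ_preimage hf.2 hM
end
end

section
/- Let V be a vertex algebra, I an ideal of V, and M a subspace with I ⊆ M. Then M is a Mathieu-Zhao subspace of V with respect to the 0-th and (-1)-th products if and only if M/I is a Mathieu-Zhao subspace of the quotient vertex algebra V/I. -/
open scoped BigOperators

noncomputable section

/-- Let `I` be an ideal of the vertex algebra `V` and `M ⊇ I` a subspace.
Realizing the quotient `V/I` as the target of a surjective vertex algebra homomorphism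
`f : V → W` with kernel `I`, `M` is a MZ_{0,-1}-subspace of `V` iff `M/I = f(M)` is a
MZ_{0,-1}-subspace of `V/I = W`. -/
theorem stmt12 {V W : Type} [AddCommGroup V] [Module ℂ V] [AddCommGroup W] [Module ℂ W]
    (VA : VertexAlgebra V) (WA : VertexAlgebra W) (f : V →ₗ[ℂ] W)
    (hf : VertexAlgebra.IsHom VA WA f) (hsurj : Function.Surjective f)
    (I : Submodule ℂ V) (hI : VA.IsIdeal I) (hker : ∀ v : V, f v = 0 ↔ v ∈ I)
    (M : Submodule ℂ V) (hIM : I ≤ M) :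
    VA.IsMZ (M : Set V) ↔ WA.IsMZ ((M.map f : Submodule ℂ W) : Set W) := by
  -- membership correspondence
  have hmem : ∀ v : V, f v ∈ M.map f ↔ v ∈ M := by
    intro v
    constructor
    · rintro ⟨m, hm, hfm⟩
      have : v - m ∈ I := by
        rw [← hker]; simp [map_sub, hfm]
      have : v - m ∈ M := hIM this
      have := M.add_mem this hm
      simpa using this
    · intro hv; exact ⟨v, hv, rfl⟩
  -- word correspondence
  have hword : ∀ (v : V) (ns : List ℤ), f (VA.word v ns) = WA.word (f v) ns := by
    intro v ns
    induction ns with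
    | nil => rfl
    | cons n ns ih =>
      simp only [VertexAlgebra.word, List.foldr_cons] at *
      rw [hf.2, ih]
  -- rad correspondence
  have hrad : ∀ v : V, v ∈ VA.rad (M : Set V) ↔ f v ∈ WA.rad ((M.map f : Submodule ℂ W) : Set W) := by
    intro v
    constructor
    · rintro ⟨m, hm⟩
      exact ⟨m, fun ns hg hl => by rw [← hword]; exact (hmem _).2 (hm ns hg hl)⟩
    · rintro ⟨m, hm⟩
      refine ⟨m, fun ns hg hl => ?_⟩
      have := hm ns hg hl
      rw [← hword] at this
      exact (hmem _).1 this
  -- lsrad correspondence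
  have hlsrad : ∀ v : V, v ∈ VA.lsrad (M : Set V) ↔
      f v ∈ WA.lsrad ((M.map f : Submodule ℂ W) : Set W) := by
    intro v
    constructor
    · intro hv b'
      obtain ⟨b, rfl⟩ := hsurj b'
      obtain ⟨m, hm⟩ := hv b
      refine ⟨m, fun ns s hg hl hs => ?_⟩
      rw [← hword, ← hf.2]
      exact (hmem _).2 (hm ns s hg hl hs)
    · intro hv b
      obtain ⟨m, hm⟩ := hv (f b)
      refine ⟨m, fun ns s hg hl hs => ?_⟩
      have := hm ns s hg hl hs
      rw [← hword, ← hf.2] at this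
      exact (hmem _).1 this
  -- rsrad correspondence
  have hrsrad : ∀ v : V, v ∈ VA.rsrad (M : Set V) ↔
      f v ∈ WA.rsrad ((M.map f : Submodule ℂ W) : Set W) := by
    intro v
    constructor
    · intro hv w'
      obtain ⟨w, rfl⟩ := hsurj w'
      obtain ⟨m, hm⟩ := hv w
      refine ⟨m, fun ns s hg hl hs => ?_⟩
      rw [← hword, ← hf.2]
      exact (hmem _).2 (hm ns s hg hl hs)
    · intro hv w
      obtain ⟨m, hm⟩ := hv (f w)
      refine ⟨m, fun ns s hg hl hs => ?_⟩
      have := hm ns s hg hl hs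
      rw [← hword, ← hf.2] at this
      exact (hmem _).1 this
  have hsrad : ∀ v : V, v ∈ VA.srad (M : Set V) ↔
      f v ∈ WA.srad ((M.map f : Submodule ℂ W) : Set W) := by
    intro v
    simp only [VertexAlgebra.srad, Set.mem_inter_iff, hlsrad v, hrsrad v]
  constructor
  · intro h
    ext w
    obtain ⟨v, rfl⟩ := hsurj w
    rw [← hrad v, ← hsrad v, h]
  · intro h
    ext v
    rw [hrad v, hsrad v, h]
end
end

section
/- Let K be a field and A a commutative K-algebra, and let U be a K-subspace of A whose radical r(U) is algebraic over K (e.g. when dim_K U < ∞ or dim_K A < ∞). If U contains no nonzero idempotent of A, then U is a Mathieu-Zhao subspace of A. -/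
open scoped BigOperators

noncomputable section

/-- The radical `r(U)` of a subspace `U` of a commutative algebra `A`. -/
def algRad {K A : Type} [Field K] [CommRing A] [Algebra K A] (U : Submodule K A) :
    Set A :=
  {a : A | ∃ m : ℕ, 1 ≤ m ∧ ∀ t : ℕ, m ≤ t → a ^ t ∈ U}

/-- The strong radical `sr(U)` of a subspace `U` of a commutative algebra `A`. -/
def algSRad {K A : Type} [Field K] [CommRing A] [Algebra K A] (U : Submodule K A) :
    Set A :=
  {a : A | ∀ b : A, ∃ m : ℕ, 1 ≤ m ∧ ∀ t : ℕ, m ≤ t → b * a ^ t ∈ U}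

lemma aeval_mem_of_low_coeff_zero {K A : Type} [Field K] [CommRing A] [Algebra K A]
    (U : Submodule K A) (a : A) (m : ℕ) (ha : ∀ t : ℕ, m ≤ t → a ^ t ∈ U)
    (P : Polynomial K) (hP : ∀ j < m, P.coeff j = 0) : Polynomial.aeval a P ∈ U := by
  rw [Polynomial.aeval_eq_sum_range]
  apply Submodule.sum_mem
  intro i _
  by_cases h : P.coeff i = 0
  · simp [h]
  · exact Submodule.smul_mem _ _ (ha i (le_of_not_gt fun hi => h (hP i hi)))

/-- Let `K` be a field, `A` a commutative `K`-algebra and `U` a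
`K`-subspace of `A` whose radical `r(U)` is algebraic over `K`. If `U` contains no
nonzero idempotent of `A`, then `U` is a Mathieu-Zhao subspace of `A`, i.e.
`r(U) = sr(U)`. -/
theorem stmt19 {K A : Type} [Field K] [CommRing A] [Algebra K A] (U : Submodule K A)
    (halg : ∀ a ∈ algRad U, IsAlgebraic K a)
    (hidem : ∀ a : A, a ∈ U → a * a = a → a = 0) :
    algRad U = algSRad U := by
  ext a
  constructor
  · intro ha
    obtain ⟨m, hm1, hU⟩ := ha
    obtain ⟨p, hp0, hpa⟩ := halg a ⟨m, hm1, hU⟩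
    set k := p.rootMultiplicity 0 with hk
    obtain ⟨q, hq, hndvd⟩ := p.exists_eq_pow_rootMultiplicity_mul_and_not_dvd hp0 0
    rw [Polynomial.C_0, sub_zero] at hq hndvd
    have hc : q.coeff 0 ≠ 0 := fun h => hndvd (Polynomial.X_dvd_iff.mpr h)
    set c := q.coeff 0
    set h : Polynomial K := Polynomial.C (-c⁻¹) * q.divX with hh
    set z := Polynomial.aeval a h with hz
    -- key identity : a^k * (a * z) = a^k
    have hq' : Polynomial.X * q.divX + Polynomial.C c = q := Polynomial.X_mul_divX_add q
    have hzero : a ^ k * (a * Polynomial.aeval a q.divX + algebraMap K A c) = 0 := by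
      have h0 : a ^ k * Polynomial.aeval a q = 0 := by
        rw [hq, map_mul, map_pow, Polynomial.aeval_X] at hpa; exact hpa
      rw [← hq', map_add, map_mul, Polynomial.aeval_X, Polynomial.aeval_C] at h0
      exact h0
    have hkey0 : a ^ k * (a * z) = a ^ k := by
      have h1 : a ^ k * (a * Polynomial.aeval a q.divX) = -(a ^ k * algebraMap K A c) := by
        have := hzero
        ring_nf at this ⊢
        linear_combination this
      have h3 : a ^ k * (a * z) = algebraMap K A (-c⁻¹) * (a ^ k * (a * Polynomial.aeval a q.divX)) := by
        rw [hz, hh, map_mul, Polynomial.aeval_C]; ring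
      rw [h3, h1]
      rw [show algebraMap K A (-c⁻¹) * -(a ^ k * algebraMap K A c)
          = a ^ k * (algebraMap K A (c⁻¹ * c)) by rw [map_mul]; push_cast [map_neg]; ring]
      rw [inv_mul_cancel₀ hc, map_one, mul_one]
    set N := max m k with hN
    have hkN : k ≤ N := le_max_right _ _
    have hmN : m ≤ N := le_max_left _ _
    have hNkey : a ^ N * (a * z) = a ^ N := by
      have h4 : a ^ N = a ^ (N - k) * a ^ k := by
        rw [← pow_add, Nat.sub_add_cancel hkN]
      rw [h4, mul_assoc, hkey0]
    have key : ∀ j : ℕ, a ^ N * (a * z) ^ j = a ^ N := by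
      intro j
      induction j with
      | zero => simp
      | succ j ih =>
        calc a ^ N * (a * z) ^ (j + 1) = (a ^ N * (a * z)) * (a * z) ^ j := by
              rw [pow_succ]; ring
          _ = a ^ N * (a * z) ^ j := by rw [hNkey]
          _ = a ^ N := ih
    have heU : (a * z) ^ N ∈ U := by
      have h5 : (a * z) ^ N = Polynomial.aeval a (Polynomial.X ^ N * h ^ N) := by
        rw [map_mul, map_pow, map_pow, Polynomial.aeval_X, ← hz, mul_pow]
      rw [h5]
      apply aeval_mem_of_low_coeff_zero U a m hU
      intro j hj
      exact Polynomial.X_pow_dvd_iff.mp ⟨h ^ N, rfl⟩ j (lt_of_lt_of_le hj hmN)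
    have hee : ((a * z) ^ N) * ((a * z) ^ N) = (a * z) ^ N := by
      calc ((a * z) ^ N) * ((a * z) ^ N) = a ^ N * (a * z) ^ N * z ^ N := by
            rw [mul_pow]; ring
        _ = a ^ N * z ^ N := by rw [key N]
        _ = (a * z) ^ N := (mul_pow a z N).symm
    have he0 : (a * z) ^ N = 0 := hidem _ heU hee
    have haN : a ^ N = 0 := by
      have h6 := key N
      rw [he0, mul_zero] at h6
      exact h6.symm
    intro b
    refine ⟨N, le_trans hm1 hmN, fun t ht => ?_⟩
    have : a ^ t = 0 := by
      rw [show t = N + (t - N) from (Nat.add_sub_cancel' ht).symm, pow_add, haN, zero_mul]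
    rw [this, mul_zero]
    exact U.zero_mem
  · intro ha
    obtain ⟨m, hm1, hU⟩ := ha 1
    exact ⟨m, hm1, fun t ht => by simpa using hU t ht⟩
end
end
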